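/- arXiv:math/0610943 — 2 statements merged into one kernel-verified Lean document; each statement's English description precedes it below -/
import Mathlib

section
/- For real numbers λ₁,…,λₙ, if H_r = 0 and H_{r+1} = 0 for some 1 ≤ r < n, then H_j = 0 for all r ≤ j ≤ n; in particular, at most r−1 of the λᵢ are nonzero. -/
/-!
Differentiation preserves real-rootedness (Rolle) and shifts coefficients down by one, so two
consecutive vanishing coefficients `cₖ = cₖ₊₁ = 0` of a real-rooted polynomial can be pushed down
to `c₁ = c₂ = 0`. If `c₀ ≠ 0` this contradicts `c₁² - 2 c₀ c₂ = c₀² ∑ μ⁻² > 0` (the sum over the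
roots `μ`) unless the polynomial is constant. Applied to `∏ (X + λᵢ)`, whose coefficient of `X ^ k`
is `σₙ₋ₖ`, this gives `σⱼ = 0` for all `j ≥ r`; and `σ` at the number of nonzero `λᵢ` is their
product.
-/

open scoped Classical

/-- The `r`-th elementary symmetric polynomial of `λ₁, …, λₙ`. -/
noncomputable def esymm (n r : ℕ) (l : Fin n → ℝ) : ℝ :=
  ∑ s ∈ (Finset.univ : Finset (Fin n)).powersetCard r, ∏ i ∈ s, l i

open Polynomial Finset

namespace Polynomial

theorem coeff_one_sq_sub_multiset_prod_X_sub_C {K : Type*} [Field K] (s : Multiset K)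
    (hs : ∀ a ∈ s, a ≠ 0) :
    (s.map fun a => X - C a).prod.coeff 1 ^ 2
        - 2 * (s.map fun a => X - C a).prod.coeff 0 * (s.map fun a => X - C a).prod.coeff 2
      = (s.map fun a => X - C a).prod.coeff 0 ^ 2 * (s.map fun a => a⁻¹ ^ 2).sum := by
  induction s using Multiset.induction_on with
  | empty => simp [coeff_one]
  | cons a s ih =>
    have ha : a ≠ 0 := hs a (Multiset.mem_cons_self a s)
    have ih := ih fun b hb => hs b (Multiset.mem_cons_of_mem hb)
    set P := (s.map fun a => X - C a).prod
    have hcoeff (k : ℕ) : ((X - C a) * P).coeff (k + 1) = P.coeff k - a * P.coeff (k + 1) := by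
      simp [sub_mul, coeff_X_mul]
    have hcoeff0 : ((X - C a) * P).coeff 0 = -a * P.coeff 0 := by simp [sub_mul]
    simp only [Multiset.map_cons, Multiset.prod_cons, Multiset.sum_cons]
    rw [hcoeff0, hcoeff 0, hcoeff 1]
    linear_combination a ^ 2 * ih - P.coeff 0 ^ 2 * (a * a⁻¹ + 1) * mul_inv_cancel₀ ha

theorem Splits.natDegree_eq_zero_of_coeff_one_of_coeff_two {p : ℝ[X]} (hp : p.Splits)
    (h0 : p.coeff 0 ≠ 0) (h1 : p.coeff 1 = 0) (h2 : p.coeff 2 = 0) : p.natDegree = 0 := by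
  have hroots : ∀ a ∈ p.roots, a ≠ 0 := by
    rintro a ha rfl
    exact h0 (coeff_zero_eq_eval_zero p ▸ isRoot_of_mem_roots ha)
  have key := coeff_one_sq_sub_multiset_prod_X_sub_C p.roots hroots
  set P := (p.roots.map fun a => X - C a).prod
  have hP (k : ℕ) : p.coeff k = p.leadingCoeff * P.coeff k := by
    rw [← coeff_C_mul, ← hp.eq_prod_roots]
  have hlc : p.leadingCoeff ≠ 0 := leadingCoeff_ne_zero.mpr fun h => h0 (by simp [h])
  have hP0 : P.coeff 0 ≠ 0 := right_ne_zero_of_mul (hP 0 ▸ h0)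
  have hP1 : P.coeff 1 = 0 := (mul_eq_zero.mp (hP 1 ▸ h1)).resolve_left hlc
  have hP2 : P.coeff 2 = 0 := (mul_eq_zero.mp (hP 2 ▸ h2)).resolve_left hlc
  have hsum : (p.roots.map fun a => a⁻¹ ^ 2).sum = 0 := by
    simpa [hP1, hP2, hP0] using key.symm
  rw [hp.natDegree_eq_card_roots, Multiset.card_eq_zero]
  by_contra hne
  have hpos := Multiset.sum_lt_sum_of_nonempty (f := fun _ => (0 : ℝ)) (g := fun a => a⁻¹ ^ 2)
    hne fun a ha => by have := hroots a ha; positivity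
  rw [hsum] at hpos
  simp at hpos

theorem Splits.derivative {p : ℝ[X]} (hp : p.Splits) : p.derivative.Splits := by
  rw [splits_iff_card_roots] at hp ⊢
  have := card_roots_le_derivative p
  have := card_roots' p.derivative
  have := natDegree_derivative_le p
  omega

theorem Splits.natDegree_lt_or_coeff_eq_zero {p : ℝ[X]} (hp : p.Splits) {k : ℕ}
    (hk : p.coeff k = 0) (hk' : p.coeff (k + 1) = 0) :
    p.natDegree < k ∨ ∀ j ≤ k + 1, p.coeff j = 0 := by
  induction k generalizing p with
  | zero => exact Or.inr fun j hj => by interval_cases j <;> assumption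
  | succ k ih =>
    have hcoeff (j : ℕ) : p.derivative.coeff j = 0 ↔ p.coeff (j + 1) = 0 := by
      simp [coeff_derivative, Nat.cast_add_one_ne_zero]
    rcases ih hp.derivative ((hcoeff k).mpr hk) ((hcoeff (k + 1)).mpr hk') with hdeg | hlow
    · left
      rw [natDegree_derivative] at hdeg
      omega
    · have hlow' (j : ℕ) (hj : j ≤ k + 1) : p.coeff (j + 1) = 0 := (hcoeff j).mp (hlow j hj)
      by_cases h0 : p.coeff 0 = 0
      · right
        rintro (_ | j) hj
        exacts [h0, hlow' j (by omega)]
      · left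
        have := hp.natDegree_eq_zero_of_coeff_one_of_coeff_two h0 (hlow' 0 (by omega))
          (hlow' 1 (by omega))
        omega

end Polynomial

theorem coeff_prod_X_add_C_eq_esymm {n : ℕ} (l : Fin n → ℝ) {k : ℕ} (hk : k ≤ n) :
    (∏ i, (X + C (l i))).coeff k = esymm n (n - k) l := by
  rw [Finset.prod_X_add_C_coeff _ _ (by simpa using hk), esymm, card_univ, Fintype.card_fin]

theorem esymm_eq_zero_of_le {n r : ℕ} (l : Fin n → ℝ) (hr : r < n) (h : esymm n r l = 0)
    (h' : esymm n (r + 1) l = 0) {j : ℕ} (hj : r ≤ j) : esymm n j l = 0 := by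
  rcases le_or_gt j n with hjn | hjn
  · have hp : (∏ i, (X + C (l i))).Splits := Splits.prod fun i _ => Splits.X_add_C (l i)
    have hdeg : (∏ i, (X + C (l i))).natDegree = n := by
      simp [natDegree_prod_of_monic, monic_X_add_C]
    have hcoeff {k : ℕ} (hk : k ≤ n) : (∏ i, (X + C (l i))).coeff k = esymm n (n - k) l :=
      coeff_prod_X_add_C_eq_esymm l hk
    have hk : n - (n - (r + 1)) = r + 1 := by omega
    have hk' : n - (n - (r + 1) + 1) = r := by omega
    rcases hp.natDegree_lt_or_coeff_eq_zero (k := n - (r + 1))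
        (by rw [hcoeff (by omega), hk, h']) (by rw [hcoeff (by omega), hk', h]) with hlt | hlow
    · rw [hdeg] at hlt
      omega
    · rw [← Nat.sub_sub_self hjn, ← hcoeff (by omega), hlow _ (by omega)]
  · rw [esymm, powersetCard_eq_empty.mpr (by simpa using hjn), sum_empty]

theorem esymm_card_support {n : ℕ} (l : Fin n → ℝ) :
    esymm n #(univ.filter fun i => l i ≠ 0) l = ∏ i ∈ univ.filter (fun i => l i ≠ 0), l i := by
  rw [esymm, sum_eq_single_of_mem _ (mem_powersetCard.mpr ⟨subset_univ _, rfl⟩)]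
  intro s hs hne
  obtain ⟨i, hi, hli⟩ := not_subset.mp fun hsub =>
    hne (eq_of_subset_of_card_le hsub (mem_powersetCard.mp hs).2.ge)
  exact prod_eq_zero hi (by simpa using hli)

theorem newton_vanishing_general (n : ℕ) (l : Fin n → ℝ)
    (H : ℕ → ℝ) (hH : ∀ r, H r = esymm n r l / (n.choose r))
    (r : ℕ) (hrn : r < n)
    (hr : H r = 0) (hr' : H (r + 1) = 0) :
    (∀ j : ℕ, r ≤ j → j ≤ n → H j = 0) ∧
      ((Finset.univ : Finset (Fin n)).filter (fun i => l i ≠ 0)).card ≤ r - 1 := by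
  have hesymm (j : ℕ) (hj : j ≤ n) (h : H j = 0) : esymm n j l = 0 := by
    rw [hH] at h
    exact (div_eq_zero_iff.mp h).resolve_right (Nat.cast_ne_zero.mpr (Nat.choose_pos hj).ne')
  have hvan (j : ℕ) (hj : r ≤ j) : esymm n j l = 0 :=
    esymm_eq_zero_of_le l hrn (hesymm r hrn.le hr) (hesymm (r + 1) hrn hr') hj
  refine ⟨fun j hj _ => by rw [hH, hvan j hj, zero_div], ?_⟩
  by_contra! hcard
  have hprod : ∏ i ∈ univ.filter (fun i => l i ≠ 0), l i ≠ 0 :=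
    prod_ne_zero_iff.mpr fun i hi => (mem_filter.mp hi).2
  exact hprod (esymm_card_support l ▸ hvan _ (by omega))

/-- If `H_r = H_{r+1} = 0` for some `1 ≤ r < n`, then `H_j = 0` for all
`r ≤ j ≤ n`; in particular at most `r - 1` of the `λᵢ` are nonzero. -/
theorem newton_vanishing (n : ℕ) (hn : 1 < n) (l : Fin n → ℝ)
    (H : ℕ → ℝ) (hH : ∀ r, H r = esymm n r l / (n.choose r))
    (r : ℕ) (hr1 : 1 ≤ r) (hrn : r < n)
    (hr : H r = 0) (hr' : H (r + 1) = 0) :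
    (∀ j : ℕ, r ≤ j → j ≤ n → H j = 0) ∧
      ((Finset.univ : Finset (Fin n)).filter (fun i => l i ≠ 0)).card ≤ r - 1 :=
  newton_vanishing_general n l H hH r hrn hr hr'
end

section
/- Let A be a self-adjoint endomorphism with all eigenvalues negative (an elliptic point). If H_r > 0, where H_r = (−1)^r S_r / (n choose r), then the Newton transformation P_{r−1} is positive definite. -/
open scoped InnerProductSpace

/-- The Newton transformations associated to an endomorphism `A` and the
elementary symmetric functions `S` of its eigenvalues:
`P₀ = I`, `P_r = (−1)^r S_r I + A ∘ P_{r−1}`. -/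
noncomputable def newtonP {E : Type*} [NormedAddCommGroup E] [InnerProductSpace ℝ E]
    (A : E →ₗ[ℝ] E) (S : ℕ → ℝ) : ℕ → (E →ₗ[ℝ] E)
  | 0 => LinearMap.id
  | r + 1 => ((-1 : ℝ) ^ (r + 1) * S (r + 1)) • LinearMap.id + A ∘ₗ newtonP A S r

/-!
Every eigenvector `b i` of `A` is an eigenvector of each `P_k`, with eigenvalue
`(-1)^k S_k(λ̂ᵢ)`, where `λ̂ᵢ` is the list of eigenvalues with `λᵢ` removed; this comes from
`S_{k+1}(λ) = S_{k+1}(λ̂ᵢ) + λᵢ S_k(λ̂ᵢ)`. If all eigenvalues are negative, then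
`(-1)^k S_k(λ̂ᵢ) = S_k(-λ̂ᵢ) > 0` for `k ≤ n - 1`, so `P_{r-1}` is diagonal with positive
entries in the orthonormal eigenbasis.
-/

namespace Multiset

theorem esymm_cons_succ {R : Type*} [CommSemiring R] (a : R) (s : Multiset R) (k : ℕ) :
    (a ::ₘ s).esymm (k + 1) = s.esymm (k + 1) + a * s.esymm k := by
  simp only [esymm, powersetCard_cons, map_add, sum_add, map_map, Function.comp_def, prod_cons,
    sum_map_mul_left]

theorem esymm_pos {R : Type*} [CommSemiring R] [PartialOrder R] [IsStrictOrderedRing R]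
    {s : Multiset R} (hs : ∀ a ∈ s, 0 < a) {k : ℕ} (hk : k ≤ card s) : 0 < s.esymm k := by
  have hne : s.powersetCard k ≠ 0 := by simp [← card_pos, Nat.choose_pos hk]
  simpa [esymm] using sum_lt_sum_of_nonempty hne (f := fun _ ↦ 0) (g := prod)
    fun t ht ↦ prod_pos fun a ha ↦ hs a (mem_of_le (mem_powersetCard.1 ht).1 ha)

theorem neg_one_pow_mul_esymm_pos {R : Type*} [CommRing R] [PartialOrder R]
    [IsStrictOrderedRing R] {s : Multiset R} (hs : ∀ a ∈ s, a < 0) {k : ℕ} (hk : k ≤ card s) :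
    0 < (-1) ^ k * s.esymm k := by
  rw [← esymm_neg]
  exact esymm_pos (by simpa using hs) (by simpa using hk)

end Multiset

section NewtonTransformation

variable {E : Type*} [NormedAddCommGroup E] [InnerProductSpace ℝ E]

theorem newtonP_apply_of_apply_eq_smul (A : E →ₗ[ℝ] E) (S e : ℕ → ℝ) {v : E} {μ : ℝ}
    (hv : A v = μ • v) (he : e 0 = 1) (hS : ∀ k, S (k + 1) = e (k + 1) + μ * e k) (k : ℕ) :
    newtonP A S k v = ((-1) ^ k * e k) • v := by
  induction k with
  | zero => simp [newtonP, he]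
  | succ k ih =>
    simp only [newtonP, LinearMap.add_apply, LinearMap.smul_apply, LinearMap.id_apply,
      LinearMap.comp_apply, ih, map_smul, hv, smul_smul, ← add_smul, hS]
    ring_nf

theorem newtonP_apply_eigenvector {n : ℕ} (A : E →ₗ[ℝ] E) (b : Fin n → E) (lam : Fin n → ℝ)
    (hb : ∀ i, A (b i) = lam i • b i) (S : ℕ → ℝ) (hS : ∀ r, S r = esymm n r lam)
    (i : Fin n) (k : ℕ) :
    newtonP A S k (b i) = ((-1) ^ k * ((Finset.univ.erase i).val.map lam).esymm k) • b i := by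
  refine newtonP_apply_of_apply_eq_smul A S _ (hb i) (by simp [Multiset.esymm]) (fun k ↦ ?_) k
  rw [hS, esymm, ← Finset.esymm_map_val, ← Multiset.esymm_cons_succ, ← Multiset.map_cons,
    ← Finset.insert_val_of_notMem (Finset.notMem_erase i _),
    Finset.insert_erase (Finset.mem_univ i)]

theorem OrthonormalBasis.inner_apply_self_pos_of_apply_eq_smul {ι : Type*} [Fintype ι]
    (b : OrthonormalBasis ι ℝ E) (T : E →ₗ[ℝ] E) (c : ι → ℝ) (hT : ∀ i, T (b i) = c i • b i)
    (hc : ∀ i, 0 < c i) {v : E} (hv : v ≠ 0) : 0 < ⟪T v, v⟫_ℝ := by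
  have hTv : T v = ∑ i, (b.repr v i * c i) • b i := by
    conv_lhs => rw [← b.sum_repr v]
    simp [map_sum, hT, smul_smul]
  obtain ⟨j, hj⟩ : ∃ j, b.repr v j ≠ 0 := by
    by_contra! h
    exact hv (b.repr.map_eq_zero_iff.1 (by ext j; simp [h]))
  rw [hTv, ← b.sum_repr v, b.orthonormal.inner_sum, b.sum_repr v]
  simp only [conj_trivial, mul_right_comm _ (c _), ← sq]
  exact Finset.sum_pos' (fun i _ ↦ mul_nonneg (sq_nonneg _) (hc i).le)
    ⟨j, Finset.mem_univ j, mul_pos (sq_pos_of_ne_zero hj) (hc j)⟩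

end NewtonTransformation

theorem newtonP_posDef_of_elliptic_general {E : Type*} [NormedAddCommGroup E]
    [InnerProductSpace ℝ E]
    (n : ℕ)
    (A : E →ₗ[ℝ] E)
    (b : OrthonormalBasis (Fin n) ℝ E) (lam : Fin n → ℝ)
    (hb : ∀ i, A (b i) = lam i • b i)
    (S : ℕ → ℝ) (hS : ∀ r, S r = esymm n r lam)
    (hneg : ∀ i, lam i < 0)
    (r : ℕ) (hrn : r ≤ n) :
    ∀ v : E, v ≠ 0 → 0 < ⟪newtonP A S (r - 1) v, v⟫_ℝ := by
  intro v hv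
  refine b.inner_apply_self_pos_of_apply_eq_smul _ _
    (fun i ↦ newtonP_apply_eigenvector A b lam hb S hS i (r - 1)) (fun i ↦ ?_) hv
  refine Multiset.neg_one_pow_mul_esymm_pos ?_ ?_
  · simpa using fun j _ ↦ hneg j
  · simp
    omega

/-- If all eigenvalues of `A` are negative (elliptic point) and
`H_r = (−1)^r S_r / (n choose r) > 0`, then `P_{r−1}` is positive definite. -/
theorem newtonP_posDef_of_elliptic {E : Type*} [NormedAddCommGroup E]
    [InnerProductSpace ℝ E] [FiniteDimensional ℝ E]
    (n : ℕ) (hdim : Module.finrank ℝ E = n)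
    (A : E →ₗ[ℝ] E) (hA : A.IsSymmetric)
    (b : OrthonormalBasis (Fin n) ℝ E) (lam : Fin n → ℝ)
    (hb : ∀ i, A (b i) = lam i • b i)
    (S : ℕ → ℝ) (hS : ∀ r, S r = esymm n r lam)
    (hneg : ∀ i, lam i < 0)
    (r : ℕ) (hr1 : 1 ≤ r) (hrn : r ≤ n)
    (hHr : 0 < (-1 : ℝ) ^ r * S r / (n.choose r)) :
    ∀ v : E, v ≠ 0 → 0 < ⟪newtonP A S (r - 1) v, v⟫_ℝ :=
  newtonP_posDef_of_elliptic_general n A b lam hb S hS hneg r hrn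
end
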